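/- arXiv:0902.0886 — 3 statements merged into one kernel-verified Lean document; each statement's English description precedes it below -/
import Mathlib

section
/- Let λ_j : ℝ → [0,∞) for j ∈ ℤ∖{0} satisfy σ²(z) := Σ_{j≠0} j²·λ_j(z) < ∞ for every z ∈ ℝ, let n ≥ 1 be an integer, and let h : ℤ → ℝ have bounded differences, i.e. sup_{i∈ℤ} |h(i+1) − h(i)| < ∞. Set g(i) := h(i+1) − h(i) and ∇g(i) := g(i) − g(i−1). Then for every i ∈ ℤ all the series below converge absolutely, and Σ_{j≠0} n·λ_j(i/n)·(h(i+j) − h(i)) = (n/2)·σ²(i/n)·∇g(i) + n·F(i/n)·g(i) − (n/2)·F(i/n)·∇g(i) + Σ_{j≥2} a_j(g,i)·n·λ_j(i/n) − Σ_{j≥2} b_j(g,i)·n·λ_{−j}(i/n), where F(z) := Σ_{j≠0} j·λ_j(z), a_j(g,i) := −(j(j−1)/2)·∇g(i) + Σ_{k=1}^{j−1} k·∇g(i+j−k), and b_j(g,i) := (j(j−1)/2)·∇g(i) − Σ_{k=1}^{j−1} k·∇g(i−j+k). -/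
/-! With `g = Δh`, the discrete Taylor formula
`h (i + j) - h i = j * g i + ∑_{k=1}^{j-1} k * ∇g (i + j - k)` for `j ≥ 0`, applied also to the
mirror image `l ↦ h (-l)` for `j < 0`, gives for every `j : ℤ`
`h (i + j) - h i = j²/2 * ∇g i + j * g i - j/2 * ∇g i + r_j`, where `r_j = a_j` for `j ≥ 0`,
`r_j = -b_{-j}` for `j < 0`, and `r_j = 0` for `|j| ≤ 1`. Multiplying by `n λ_j(i/n)` and summing
over `j` gives the decomposition. Bounded differences give `|h (i + j) - h i| ≤ M |j| ≤ M j²`, so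
every series is dominated by `∑ j² |λ_j|`, which converges since real summable series are absolutely
summable. -/

noncomputable section

/-- The backward difference `∇g(i) = g(i) − g(i−1)`. -/
def del (g : ℤ → ℝ) (i : ℤ) : ℝ := g i - g (i - 1)

/-- The coefficient `a_j(g,i)` from the generator decomposition. -/
def aCoef (g : ℤ → ℝ) (j i : ℤ) : ℝ :=
  -((j : ℝ) * ((j : ℝ) - 1) / 2) * del g i
    + ∑ k ∈ Finset.Icc 1 (j - 1), (k : ℝ) * del g (i + j - k)

/-- The coefficient `b_j(g,i)` from the generator decomposition. -/
def bCoef (g : ℤ → ℝ) (j i : ℤ) : ℝ :=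
  ((j : ℝ) * ((j : ℝ) - 1) / 2) * del g i
    - ∑ k ∈ Finset.Icc 1 (j - 1), (k : ℝ) * del g (i - j + k)

open Finset

lemma sum_Icc_one_mul_eq_add {j : ℤ} (hj : 0 ≤ j) (F : ℤ → ℝ) :
    ∑ k ∈ Icc 1 j, (k : ℝ) * F k = ∑ k ∈ Icc 1 (j - 1), (k : ℝ) * F k + j * F j := by
  rcases hj.eq_or_lt with rfl | hj
  · simp
  · rw [← insert_Icc_sub_one_right_eq_Icc (by omega : (1 : ℤ) ≤ j),
      sum_insert (by simp), add_comm]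

lemma sub_eq_mul_add_sum_del (h : ℤ → ℝ) (j : ℕ) (i : ℤ) :
    h (i + j) - h i = j * (h (i + 1) - h i)
      + ∑ k ∈ Icc 1 ((j : ℤ) - 1), (k : ℝ) * del (fun l => h (l + 1) - h l) (i + j - k) := by
  induction j generalizing i with
  | zero => simp
  | succ j ih =>
    -- Removing the top term `k = j` leaves the formula for `j` at the base point `i + 1`.
    have step := ih (i + 1)
    push_cast
    rw [add_sub_cancel_right, sum_Icc_one_mul_eq_add (Int.natCast_nonneg j)]
    simp only [del] at step ⊢
    ring_nf at step ⊢
    linear_combination step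

lemma del_comp_neg (h : ℤ → ℝ) (m : ℤ) :
    del (fun l => h (-(l + 1)) - h (-l)) m = del (fun l => h (l + 1) - h l) (-m) := by
  simp only [del]
  ring_nf

lemma sub_eq_add_aCoef (h : ℤ → ℝ) (i : ℤ) (j : ℕ) :
    h (i + j) - h i = (j : ℝ) ^ 2 / 2 * del (fun l => h (l + 1) - h l) i
      + j * (h (i + 1) - h i) - (j : ℝ) / 2 * del (fun l => h (l + 1) - h l) i
      + aCoef (fun l => h (l + 1) - h l) j i := by
  rw [sub_eq_mul_add_sum_del, aCoef]
  push_cast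
  ring

lemma sub_eq_add_bCoef (h : ℤ → ℝ) (i : ℤ) (j : ℕ) :
    h (i - j) - h i = (j : ℝ) ^ 2 / 2 * del (fun l => h (l + 1) - h l) i
      - j * (h (i + 1) - h i) + (j : ℝ) / 2 * del (fun l => h (l + 1) - h l) i
      - bCoef (fun l => h (l + 1) - h l) j i := by
  have reflected := sub_eq_mul_add_sum_del (fun l => h (-l)) j (-i)
  beta_reduce at reflected
  simp only [del_comp_neg] at reflected
  simp only [show ∀ k : ℤ, -(-i + j - k) = i - j + k from fun k => by ring,
    show -(-i + j) = i - j by ring, show -(-i + 1) = i - 1 by ring, neg_neg] at reflected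
  have hdel : del (fun l => h (l + 1) - h l) i = h (i + 1) - 2 * h i + h (i - 1) := by
    simp only [del, sub_add_cancel]
    ring
  rw [bCoef]
  push_cast
  linear_combination reflected - (j : ℝ) * hdel

def quadRem (g : ℤ → ℝ) (i j : ℤ) : ℝ := if 0 ≤ j then aCoef g j i else -bCoef g (-j) i

lemma sub_eq_add_quadRem (h : ℤ → ℝ) (i j : ℤ) :
    h (i + j) - h i = (j : ℝ) ^ 2 / 2 * del (fun l => h (l + 1) - h l) i
      + j * (h (i + 1) - h i) - (j : ℝ) / 2 * del (fun l => h (l + 1) - h l) i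
      + quadRem (fun l => h (l + 1) - h l) i j := by
  rw [quadRem]
  obtain ⟨m, rfl | rfl⟩ := Int.eq_nat_or_neg j
  · rw [if_pos (by positivity), sub_eq_add_aCoef]
    push_cast
    ring
  · rcases m.eq_zero_or_pos with rfl | hm
    · simp [aCoef]
    rw [if_neg (by omega), neg_neg, ← sub_eq_add_neg, sub_eq_add_bCoef]
    push_cast
    ring

section quadRem

variable (g : ℤ → ℝ) (i : ℤ)

@[simp] lemma quadRem_zero : quadRem g i 0 = 0 := by simp [quadRem, aCoef]

@[simp] lemma quadRem_one : quadRem g i 1 = 0 := by simp [quadRem, aCoef]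

@[simp] lemma quadRem_neg_one : quadRem g i (-1) = 0 := by simp [quadRem, bCoef]

@[simp] lemma quadRem_natCast_add_two (m : ℕ) : quadRem g i (m + 2) = aCoef g (m + 2) i :=
  if_pos (by positivity)

@[simp] lemma quadRem_neg_natCast_add_two (m : ℕ) :
    quadRem g i (-(m + 2)) = -bCoef g (m + 2) i := by
  rw [quadRem, if_neg (by omega), neg_neg]

end quadRem

lemma tsum_int_eq_tsum_add_two_add_tsum_neg {G : ℤ → ℝ} (hG : Summable G)
    (h₀ : G 0 = 0) (h₁ : G 1 = 0) (hneg₁ : G (-1) = 0) :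
    ∑' j, G j = ∑' m : ℕ, G (m + 2) + ∑' m : ℕ, G (-(m + 2)) := by
  have hpos : Summable fun m : ℕ => G m := hG.comp_injective Nat.cast_injective
  have hneg : Summable fun m : ℕ => G (-(m + 1)) :=
    hG.comp_injective fun a b hab => by simpa using hab
  rw [tsum_of_nat_of_neg_add_one hpos hneg, ← hpos.sum_add_tsum_nat_add 2,
    ← hneg.sum_add_tsum_nat_add 1]
  simp [sum_range_succ, h₀, h₁, hneg₁, add_assoc, one_add_one_eq_two]

lemma summable_split_of_summable_quadRem_mul {g w : ℤ → ℝ} {i : ℤ}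
    (hw : Summable fun j => quadRem g i j * w j) :
    Summable (fun m : ℕ => |aCoef g (m + 2) i * w (m + 2)|) ∧
    Summable (fun m : ℕ => |bCoef g (m + 2) i * w (-(m + 2))|) ∧
    ∑' j, quadRem g i j * w j
      = ∑' m : ℕ, aCoef g (m + 2) i * w (m + 2) - ∑' m : ℕ, bCoef g (m + 2) i * w (-(m + 2)) := by
  refine ⟨?_, ?_, ?_⟩
  · refine (hw.abs.comp_injective (i := fun m : ℕ => (m : ℤ) + 2)
      fun a b hab => by simpa using hab).congr fun m => ?_
    simp
  · refine (hw.abs.comp_injective (i := fun m : ℕ => -((m : ℤ) + 2))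
      fun a b hab => by simpa using hab).congr fun m => ?_
    simp only [Function.comp_apply, quadRem_neg_natCast_add_two, neg_mul, abs_neg]
  · rw [tsum_int_eq_tsum_add_two_add_tsum_neg hw (by simp) (by simp) (by simp)]
    simp only [quadRem_natCast_add_two, quadRem_neg_natCast_add_two, neg_mul, tsum_neg,
      sub_eq_add_neg]

lemma abs_sub_le_mul_abs {h : ℤ → ℝ} {M : ℝ} (hM : ∀ l, |h (l + 1) - h l| ≤ M) (i j : ℤ) :
    |h (i + j) - h i| ≤ M * |(j : ℝ)| := by
  wlog hj : 0 ≤ j generalizing i j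
  · simpa [abs_sub_comm] using this (i + j) (-j) (by omega)
  lift j to ℕ using hj
  have hsteps := dist_le_range_sum_of_dist_le (f := fun k => h (i + k)) (d := fun _ => M) j
    fun {k} _ => by simpa [Real.dist_eq, abs_sub_comm, add_assoc] using hM (i + k)
  simpa [Real.dist_eq, abs_sub_comm, mul_comm] using hsteps

lemma Int.abs_cast_le_sq (j : ℤ) : |(j : ℝ)| ≤ (j : ℝ) ^ 2 := by
  rw [← Int.cast_abs, ← Int.natCast_natAbs]
  exact_mod_cast Int.natAbs_le_self_sq j

lemma summable_abs_mul_of_summable_sq_mul {w : ℤ → ℝ}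
    (hw : Summable fun j : ℤ => (j : ℝ) ^ 2 * w j) :
    Summable fun j : ℤ => |(j : ℝ) * w j| :=
  hw.abs.of_nonneg_of_le (fun _ => abs_nonneg _) fun j => by
    rw [abs_mul, abs_mul, abs_of_nonneg (sq_nonneg (j : ℝ))]
    exact mul_le_mul_of_nonneg_right (Int.abs_cast_le_sq j) (abs_nonneg _)

lemma summable_abs_mul_sub {h w : ℤ → ℝ} {M : ℝ} (hM : ∀ l, |h (l + 1) - h l| ≤ M)
    (hw : Summable fun j : ℤ => (j : ℝ) ^ 2 * w j) (i : ℤ) :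
    Summable fun j => |w j * (h (i + j) - h i)| :=
  (hw.abs.mul_left M).of_nonneg_of_le (fun _ => abs_nonneg _) fun j => by
    have hM₀ : 0 ≤ M := (abs_nonneg _).trans (hM 0)
    calc |w j * (h (i + j) - h i)| ≤ |w j| * (M * (j : ℝ) ^ 2) := by
          rw [abs_mul]
          gcongr
          exact (abs_sub_le_mul_abs hM i j).trans
            (mul_le_mul_of_nonneg_left (Int.abs_cast_le_sq j) hM₀)
      _ = M * |(j : ℝ) ^ 2 * w j| := by
          rw [abs_mul, abs_of_nonneg (sq_nonneg (j : ℝ))]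
          ring

theorem generator_decomposition_general
    (lam : ℤ → ℝ → ℝ)
    (hσ : ∀ z : ℝ, Summable (fun j : ℤ => (j : ℝ) ^ 2 * lam j z))
    (n : ℕ)
    (h : ℤ → ℝ) (hbd : ∃ M : ℝ, ∀ i : ℤ, |h (i + 1) - h i| ≤ M) (i : ℤ) :
    Summable (fun j : ℤ => |(n : ℝ) * lam j ((i : ℝ) / n) * (h (i + j) - h i)|) ∧
    Summable (fun j : ℤ => |(j : ℝ) * lam j ((i : ℝ) / n)|) ∧
    Summable (fun m : ℕ =>
      |aCoef (fun l => h (l + 1) - h l) ((m : ℤ) + 2) i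
        * ((n : ℝ) * lam ((m : ℤ) + 2) ((i : ℝ) / n))|) ∧
    Summable (fun m : ℕ =>
      |bCoef (fun l => h (l + 1) - h l) ((m : ℤ) + 2) i
        * ((n : ℝ) * lam (-((m : ℤ) + 2)) ((i : ℝ) / n))|) ∧
    (∑' j : ℤ, (n : ℝ) * lam j ((i : ℝ) / n) * (h (i + j) - h i))
      = (n : ℝ) / 2 * (∑' j : ℤ, (j : ℝ) ^ 2 * lam j ((i : ℝ) / n))
            * del (fun l => h (l + 1) - h l) i
        + (n : ℝ) * (∑' j : ℤ, (j : ℝ) * lam j ((i : ℝ) / n)) * (h (i + 1) - h i)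
        - (n : ℝ) / 2 * (∑' j : ℤ, (j : ℝ) * lam j ((i : ℝ) / n))
            * del (fun l => h (l + 1) - h l) i
        + (∑' m : ℕ, aCoef (fun l => h (l + 1) - h l) ((m : ℤ) + 2) i
            * ((n : ℝ) * lam ((m : ℤ) + 2) ((i : ℝ) / n)))
        - (∑' m : ℕ, bCoef (fun l => h (l + 1) - h l) ((m : ℤ) + 2) i
            * ((n : ℝ) * lam (-((m : ℤ) + 2)) ((i : ℝ) / n))) := by
  obtain ⟨M, hM⟩ := hbd
  set z : ℝ := (i : ℝ) / n
  set g : ℤ → ℝ := fun l => h (l + 1) - h l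
  have hσz := hσ z
  have hfirst := summable_abs_mul_of_summable_sq_mul hσz
  have hgen : Summable fun j : ℤ => |(n : ℝ) * lam j z * (h (i + j) - h i)| :=
    summable_abs_mul_sub hM ((hσz.mul_left (n : ℝ)).congr fun j => by ring) i
  have hexpand : ∀ j : ℤ, (n : ℝ) * lam j z * (h (i + j) - h i)
      = n / 2 * del g i * ((j : ℝ) ^ 2 * lam j z) + n * g i * ((j : ℝ) * lam j z)
        - n / 2 * del g i * ((j : ℝ) * lam j z) + quadRem g i j * (n * lam j z) := fun j => by
    rw [sub_eq_add_quadRem]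
    ring
  have hA := hσz.mul_left (n / 2 * del g i)
  have hB := hfirst.of_abs.mul_left (n * g i)
  have hC := hfirst.of_abs.mul_left (n / 2 * del g i)
  have hrem : Summable fun j => quadRem g i j * (n * lam j z) :=
    (((hgen.of_abs.sub hA).sub hB).add hC).congr fun j => by
      rw [hexpand]
      ring
  obtain ⟨ha, hb, hsplit⟩ := summable_split_of_summable_quadRem_mul hrem
  refine ⟨hgen, hfirst, ha, hb, ?_⟩
  rw [tsum_congr hexpand, ((hA.add hB).sub hC).tsum_add hrem, (hA.add hB).tsum_sub hC,
    hA.tsum_add hB, tsum_mul_left, tsum_mul_left, tsum_mul_left, hsplit]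
  ring

/-- Exact decomposition of the generator `(𝒜_n h)(i) = Σ_{j≠0} n λ_j(i/n)(h(i+j) − h(i))`
for `h` with bounded differences (with `g(i) = h(i+1) − h(i)`), together with the
absolute convergence of all the series involved. -/
theorem generator_decomposition
    (lam : ℤ → ℝ → ℝ)
    (lam_nonneg : ∀ j z, 0 ≤ lam j z)
    (lam_zero : ∀ z, lam 0 z = 0)
    (hσ : ∀ z : ℝ, Summable (fun j : ℤ => (j : ℝ) ^ 2 * lam j z))
    (n : ℕ) (hn : 1 ≤ n)
    (h : ℤ → ℝ) (hbd : ∃ M : ℝ, ∀ i : ℤ, |h (i + 1) - h i| ≤ M) (i : ℤ) :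
    Summable (fun j : ℤ => |(n : ℝ) * lam j ((i : ℝ) / n) * (h (i + j) - h i)|) ∧
    Summable (fun j : ℤ => |(j : ℝ) * lam j ((i : ℝ) / n)|) ∧
    Summable (fun m : ℕ =>
      |aCoef (fun l => h (l + 1) - h l) ((m : ℤ) + 2) i
        * ((n : ℝ) * lam ((m : ℤ) + 2) ((i : ℝ) / n))|) ∧
    Summable (fun m : ℕ =>
      |bCoef (fun l => h (l + 1) - h l) ((m : ℤ) + 2) i
        * ((n : ℝ) * lam (-((m : ℤ) + 2)) ((i : ℝ) / n))|) ∧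
    (∑' j : ℤ, (n : ℝ) * lam j ((i : ℝ) / n) * (h (i + j) - h i))
      = (n : ℝ) / 2 * (∑' j : ℤ, (j : ℝ) ^ 2 * lam j ((i : ℝ) / n))
            * del (fun l => h (l + 1) - h l) i
        + (n : ℝ) * (∑' j : ℤ, (j : ℝ) * lam j ((i : ℝ) / n)) * (h (i + 1) - h i)
        - (n : ℝ) / 2 * (∑' j : ℤ, (j : ℝ) * lam j ((i : ℝ) / n))
            * del (fun l => h (l + 1) - h l) i
        + (∑' m : ℕ, aCoef (fun l => h (l + 1) - h l) ((m : ℤ) + 2) i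
            * ((n : ℝ) * lam ((m : ℤ) + 2) ((i : ℝ) / n)))
        - (∑' m : ℕ, bCoef (fun l => h (l + 1) - h l) ((m : ℤ) + 2) i
            * ((n : ℝ) * lam (-((m : ℤ) + 2)) ((i : ℝ) / n))) :=
  generator_decomposition_general lam hσ n h hbd i
end
end

section
/- For every μ > 0 and every r ∈ ℤ with r + ⌊μ⌋ ≥ 0, the translated Stein–Chen solution satisfies sup_{l ∈ ℤ} |ĝ_{μ,r}(l)| ≤ sup_{l ∈ ℤ} |ĝ_{μ,r}(l+1) − ĝ_{μ,r}(l)| ≤ 1/μ. -/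
noncomputable section

/-- The Stein–Chen solution `g_{μ,s}` for the one-point set `{s}`: the unique
function with `g 0 = 0` and `μ·g(j+1) − j·g(j) = 1[j=s] − e^{−μ} μ^s / s!`. -/
def steinChen (μ : ℝ) (s : ℕ) : ℕ → ℝ
  | 0 => 0
  | j + 1 => ((j : ℝ) * steinChen μ s j + (if j = s then 1 else 0)
      - Real.exp (-μ) * μ ^ s / (Nat.factorial s : ℝ)) / μ

/-- The translated Stein–Chen solution `ĝ_{μ,r}`. -/
def ghat (μ : ℝ) (r : ℤ) (l : ℤ) : ℝ :=
  if l < -⌊μ⌋ then 0 else steinChen μ (r + ⌊μ⌋).toNat (l + ⌊μ⌋).toNat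

/-!
Write `p_k = e^{-μ} μ^k / k!` and `F` for the Poisson distribution function. Summing the Stein
equation gives `μ p_j g(j+1) = p_s (1[s ≤ j] - F_j)`, so `g ≤ 0` on `[0, s]` and `g ≥ 0` beyond.
On `[0, s]` the Stein equation at `j` and `j + 1` gives `μ Δ_{j+1} = j Δ_j + g(j+1)` for
`Δ_j = g(j+1) - g(j)`, which keeps `g` nonincreasing there; beyond `s`,
`g(j+1) = (p_s / μ) ∑_{i ≥ 1} p_{j+i} / p_j` is nonincreasing by log-concavity of the weights.
Hence every value of `g`, and of `ĝ`, lies between `g(s) = ĝ(r)` and `g(s+1) = ĝ(r+1)`, so both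
suprema are controlled by this single jump, which the same difference identity at `j = s - 1`
bounds by `1/μ`.
-/

open Finset Set

def poissonWeight (μ : ℝ) (k : ℕ) : ℝ := Real.exp (-μ) * μ ^ k / k.factorial

def poissonCDF (μ : ℝ) (j : ℕ) : ℝ := ∑ k ∈ range (j + 1), poissonWeight μ k

section Poisson

variable {μ : ℝ}

lemma poissonWeight_pos (hμ : 0 < μ) (k : ℕ) : 0 < poissonWeight μ k := by
  unfold poissonWeight; positivity

lemma succ_mul_poissonWeight_succ (μ : ℝ) (k : ℕ) :
    (k + 1 : ℝ) * poissonWeight μ (k + 1) = μ * poissonWeight μ k := by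
  simp only [poissonWeight, Nat.factorial_succ, Nat.cast_mul, Nat.cast_succ, pow_succ]
  field_simp

lemma hasSum_poissonWeight (μ : ℝ) : HasSum (poissonWeight μ) 1 := by
  have h := (NormedSpace.expSeries_div_hasSum_exp μ).mul_left (Real.exp (-μ))
  rw [← Real.exp_eq_exp_ℝ, ← Real.exp_add, neg_add_cancel, Real.exp_zero] at h
  exact h.congr_fun fun k => mul_div_assoc _ _ _

lemma poissonWeight_mul_le (hμ : 0 ≤ μ) {k m : ℕ} (h : k ≤ m) :
    poissonWeight μ k * poissonWeight μ (m + 1) ≤ poissonWeight μ (k + 1) * poissonWeight μ m := by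
  have hk := succ_mul_poissonWeight_succ μ k
  have hm := succ_mul_poissonWeight_succ μ m
  have hkm : (k + 1 : ℝ) ≤ m + 1 := by exact_mod_cast Nat.succ_le_succ h
  have hprod : 0 ≤ μ * poissonWeight μ k * poissonWeight μ m := by
    unfold poissonWeight; positivity
  refine le_of_mul_le_mul_left ?_ (by positivity : (0 : ℝ) < (k + 1) * (m + 1))
  calc ((k : ℝ) + 1) * (m + 1) * (poissonWeight μ k * poissonWeight μ (m + 1))
      = (k + 1) * (μ * poissonWeight μ k * poissonWeight μ m) := by
        linear_combination ((k : ℝ) + 1) * poissonWeight μ k * hm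
    _ ≤ (m + 1) * (μ * poissonWeight μ k * poissonWeight μ m) := by gcongr
    _ = (k + 1) * (m + 1) * (poissonWeight μ (k + 1) * poissonWeight μ m) := by
        linear_combination -((m : ℝ) + 1) * poissonWeight μ m * hk

lemma one_sub_poissonCDF_eq_tsum (μ : ℝ) (j : ℕ) :
    1 - poissonCDF μ j = ∑' i, poissonWeight μ (i + (j + 1)) := by
  rw [← (hasSum_poissonWeight μ).tsum_eq,
    ← (hasSum_poissonWeight μ).summable.sum_add_tsum_nat_add (j + 1), poissonCDF,
    add_sub_cancel_left]

lemma antitone_one_sub_poissonCDF_div (hμ : 0 < μ) :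
    Antitone fun j => (1 - poissonCDF μ j) / poissonWeight μ j := by
  have hsum (k : ℕ) : Summable fun i => poissonWeight μ (i + k) :=
    (summable_nat_add_iff k).mpr (hasSum_poissonWeight μ).summable
  refine antitone_nat_of_succ_le fun j => ?_
  rw [one_sub_poissonCDF_eq_tsum, one_sub_poissonCDF_eq_tsum,
    div_le_div_iff₀ (poissonWeight_pos hμ _) (poissonWeight_pos hμ _), ← tsum_mul_right,
    ← tsum_mul_right]
  refine Summable.tsum_le_tsum (fun i => ?_) ((hsum _).mul_right _) ((hsum _).mul_right _)
  have := poissonWeight_mul_le hμ.le (show j ≤ i + (j + 1) by omega)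
  rw [show i + (j + 1 + 1) = i + (j + 1) + 1 by ring]
  linarith

end Poisson

section SteinChen

variable {μ : ℝ}

lemma mu_mul_steinChen_succ (hμ : μ ≠ 0) (s j : ℕ) :
    μ * steinChen μ s (j + 1)
      = j * steinChen μ s j + (if j = s then 1 else 0) - poissonWeight μ s := by
  rw [steinChen, mul_div_cancel₀ _ hμ, poissonWeight]

lemma mu_mul_steinChen_sub (hμ : μ ≠ 0) (s j : ℕ) :
    μ * (steinChen μ s (j + 2) - steinChen μ s (j + 1))
      = j * (steinChen μ s (j + 1) - steinChen μ s j) + steinChen μ s (j + 1)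
        + (if j + 1 = s then 1 else 0) - (if j = s then 1 else 0) := by
  have h₁ := mu_mul_steinChen_succ hμ s (j + 1)
  have h₀ := mu_mul_steinChen_succ hμ s j
  push_cast at h₁
  linear_combination h₁ - h₀

lemma mu_mul_poissonWeight_mul_steinChen_succ (hμ : μ ≠ 0) (s j : ℕ) :
    μ * poissonWeight μ j * steinChen μ s (j + 1)
      = poissonWeight μ s * ((if s ≤ j then 1 else 0) - poissonCDF μ j) := by
  induction j with
  | zero =>
    have h := mu_mul_steinChen_succ hμ s 0
    have hind : poissonWeight μ 0 * (if 0 = s then 1 else 0)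
        = poissonWeight μ s * (if s ≤ 0 then 1 else 0) := by
      rcases Nat.eq_zero_or_pos s with rfl | hs
      · simp
      · simp [hs.ne, hs.not_ge]
    rw [poissonCDF, zero_add, sum_range_one]
    push_cast at h
    linear_combination poissonWeight μ 0 * h + hind
  | succ j ih =>
    have hrec := mu_mul_steinChen_succ hμ s (j + 1)
    have hw := succ_mul_poissonWeight_succ μ j
    have hind : poissonWeight μ (j + 1) * (if j + 1 = s then 1 else 0)
        + poissonWeight μ s * (if s ≤ j then 1 else 0)
        = poissonWeight μ s * (if s ≤ j + 1 then 1 else 0) := by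
      rcases lt_trichotomy s (j + 1) with h | rfl | h
      · simp [h.le, h.ne', Nat.le_of_lt_succ h]
      · simp
      · simp [h.ne, h.not_ge, (Nat.lt_of_succ_lt h).not_ge]
    rw [poissonCDF, sum_range_succ, ← poissonCDF]
    push_cast at hrec
    linear_combination poissonWeight μ (j + 1) * hrec + ih + steinChen μ s (j + 1) * hw + hind

lemma steinChen_nonpos (hμ : 0 < μ) {s j : ℕ} (h : j ≤ s) : steinChen μ s j ≤ 0 := by
  cases j with
  | zero => exact le_rfl
  | succ j =>
    have key := mu_mul_poissonWeight_mul_steinChen_succ hμ.ne' s j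
    rw [if_neg (by omega), zero_sub] at key
    have hF : 0 ≤ poissonCDF μ j := sum_nonneg fun k _ => (poissonWeight_pos hμ k).le
    have hpos : 0 < μ * poissonWeight μ j := mul_pos hμ (poissonWeight_pos hμ j)
    refine nonpos_of_mul_nonpos_right ?_ hpos
    rw [key]
    exact mul_nonpos_of_nonneg_of_nonpos (poissonWeight_pos hμ s).le (neg_nonpos.mpr hF)

lemma steinChen_succ_le (hμ : 0 < μ) {s j : ℕ} (h : j < s) :
    steinChen μ s (j + 1) ≤ steinChen μ s j := by
  induction j with
  | zero => exact steinChen_nonpos hμ h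
  | succ j ih =>
    have hrec := mu_mul_steinChen_sub hμ.ne' s j
    rw [if_neg (by omega), if_neg (by omega)] at hrec
    have hdiff := sub_nonpos.mpr (ih (by omega))
    have hg := steinChen_nonpos hμ (s := s) (j := j + 1) (by omega)
    suffices μ * (steinChen μ s (j + 2) - steinChen μ s (j + 1)) ≤ 0 by
      linarith [nonpos_of_mul_nonpos_right this hμ]
    rw [hrec]
    linarith [mul_nonpos_of_nonneg_of_nonpos (Nat.cast_nonneg j : (0 : ℝ) ≤ j) hdiff]

lemma steinChen_self_le_of_le (hμ : 0 < μ) {s j : ℕ} (h : j ≤ s) :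
    steinChen μ s s ≤ steinChen μ s j :=
  Nat.decreasingInduction (motive := fun k _ => steinChen μ s s ≤ steinChen μ s k)
    (fun _ hk ih => ih.trans (steinChen_succ_le hμ hk)) le_rfl h

lemma steinChen_succ_eq_of_le (hμ : 0 < μ) {s j : ℕ} (h : s ≤ j) :
    steinChen μ s (j + 1)
      = poissonWeight μ s / μ * ((1 - poissonCDF μ j) / poissonWeight μ j) := by
  have key := mu_mul_poissonWeight_mul_steinChen_succ hμ.ne' s j
  rw [if_pos h] at key
  have := poissonWeight_pos hμ j
  field_simp
  linear_combination key

lemma steinChen_succ_nonneg (hμ : 0 < μ) {s j : ℕ} (h : s ≤ j) :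
    0 ≤ steinChen μ s (j + 1) := by
  rw [steinChen_succ_eq_of_le hμ h, one_sub_poissonCDF_eq_tsum]
  have hs := poissonWeight_pos hμ s
  have hj := poissonWeight_pos hμ j
  have htail : 0 ≤ ∑' i, poissonWeight μ (i + (j + 1)) :=
    tsum_nonneg fun i => (poissonWeight_pos hμ _).le
  positivity

lemma steinChen_antitoneOn_Ici (hμ : 0 < μ) (s : ℕ) :
    AntitoneOn (steinChen μ s) (Ici (s + 1)) := by
  refine antitoneOn_nat_Ici_of_succ_le fun n hn => ?_
  obtain ⟨j, rfl⟩ : ∃ j, n = j + 1 := ⟨n - 1, by omega⟩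
  rw [steinChen_succ_eq_of_le hμ (by omega), steinChen_succ_eq_of_le hμ (by omega)]
  have hs := poissonWeight_pos hμ s
  exact mul_le_mul_of_nonneg_left (antitone_one_sub_poissonCDF_div hμ j.le_succ) (by positivity)

lemma steinChen_mem_Icc (hμ : 0 < μ) (s j : ℕ) :
    steinChen μ s j ∈ Icc (steinChen μ s s) (steinChen μ s (s + 1)) := by
  have hs := steinChen_nonpos hμ (le_refl s)
  have hs₁ := steinChen_succ_nonneg hμ (le_refl s)
  rcases le_or_gt j s with h | h
  · exact ⟨steinChen_self_le_of_le hμ h, (steinChen_nonpos hμ h).trans hs₁⟩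
  · obtain ⟨k, rfl⟩ : ∃ k, j = k + 1 := ⟨j - 1, by omega⟩
    exact ⟨hs.trans (steinChen_succ_nonneg hμ (by omega)),
      steinChen_antitoneOn_Ici hμ s self_mem_Ici (mem_Ici.mpr (by omega)) (by omega)⟩

lemma steinChen_self_succ_sub_self_le (hμ : 0 < μ) (s : ℕ) :
    steinChen μ s (s + 1) - steinChen μ s s ≤ 1 / μ := by
  rw [le_div_iff₀' hμ]
  cases s with
  | zero =>
    have h := mu_mul_steinChen_succ hμ.ne' 0 0
    rw [if_pos rfl, Nat.cast_zero, zero_mul, zero_add] at h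
    have := poissonWeight_pos hμ 0
    change μ * (steinChen μ 0 1 - 0) ≤ 1
    linarith
  | succ t =>
    have hrec := mu_mul_steinChen_sub hμ.ne' (t + 1) t
    rw [if_pos rfl, if_neg (by omega)] at hrec
    have hdiff := sub_nonpos.mpr (steinChen_succ_le hμ (s := t + 1) (j := t) (by omega))
    have hg := steinChen_nonpos hμ (le_refl (t + 1))
    rw [hrec]
    linarith [mul_nonpos_of_nonneg_of_nonpos (Nat.cast_nonneg t : (0 : ℝ) ≤ t) hdiff]

end SteinChen

section IntSup

variable {f : ℤ → ℝ} {a : ℤ}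

lemma ciSup_abs_sub_eq_of_forall_mem_Icc (hf : ∀ l, f l ∈ Icc (f a) (f (a + 1))) :
    (⨆ l, |f (l + 1) - f l|) = f (a + 1) - f a := by
  have hle (l : ℤ) : |f (l + 1) - f l| ≤ f (a + 1) - f a := by
    obtain ⟨h₁, h₂⟩ := hf l
    obtain ⟨h₃, h₄⟩ := hf (l + 1)
    exact abs_le.mpr ⟨by linarith, by linarith⟩
  exact le_antisymm (ciSup_le hle)
    (le_ciSup_of_le ⟨_, forall_mem_range.mpr hle⟩ a (le_abs_self _))

lemma ciSup_abs_le_of_forall_mem_Icc (h₀ : (0 : ℝ) ∈ Icc (f a) (f (a + 1)))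
    (hf : ∀ l, f l ∈ Icc (f a) (f (a + 1))) : (⨆ l, |f l|) ≤ f (a + 1) - f a :=
  ciSup_le fun l => abs_le.mpr ⟨by linarith [h₀.2, (hf l).1], by linarith [h₀.1, (hf l).2]⟩

end IntSup

section Ghat

variable {μ : ℝ} {r : ℤ}

lemma ghat_of_le {l : ℤ} (h : -⌊μ⌋ ≤ l) :
    ghat μ r l = steinChen μ (r + ⌊μ⌋).toNat (l + ⌊μ⌋).toNat :=
  if_neg h.not_gt

lemma ghat_self (hr : 0 ≤ r + ⌊μ⌋) :
    ghat μ r r = steinChen μ (r + ⌊μ⌋).toNat (r + ⌊μ⌋).toNat :=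
  ghat_of_le (by omega)

lemma ghat_self_add_one (hr : 0 ≤ r + ⌊μ⌋) :
    ghat μ r (r + 1) = steinChen μ (r + ⌊μ⌋).toNat ((r + ⌊μ⌋).toNat + 1) := by
  rw [ghat_of_le (by omega)]
  congr 1
  omega

lemma ghat_mem_Icc (hμ : 0 < μ) (hr : 0 ≤ r + ⌊μ⌋) (l : ℤ) :
    ghat μ r l ∈ Icc (ghat μ r r) (ghat μ r (r + 1)) := by
  rw [ghat_self hr, ghat_self_add_one hr, ghat]
  split_ifs
  · exact ⟨steinChen_nonpos hμ le_rfl, steinChen_succ_nonneg hμ le_rfl⟩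
  · exact steinChen_mem_Icc hμ _ _

end Ghat

/-- `sup_l |ĝ_{μ,r}(l)| ≤ sup_l |Δĝ_{μ,r}(l)| ≤ 1/μ`. -/
theorem ghat_sup_bounds (μ : ℝ) (hμ : 0 < μ) (r : ℤ) (hr : 0 ≤ r + ⌊μ⌋) :
    (⨆ l : ℤ, |ghat μ r l|) ≤ (⨆ l : ℤ, |ghat μ r (l + 1) - ghat μ r l|) ∧
    (⨆ l : ℤ, |ghat μ r (l + 1) - ghat μ r l|) ≤ 1 / μ := by
  have hmem := ghat_mem_Icc hμ hr
  have hzero : ghat μ r (-⌊μ⌋ - 1) = 0 := if_pos (by omega)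
  rw [ciSup_abs_sub_eq_of_forall_mem_Icc hmem]
  refine ⟨ciSup_abs_le_of_forall_mem_Icc (hzero ▸ hmem _) hmem, ?_⟩
  rw [ghat_self hr, ghat_self_add_one hr]
  exact steinChen_self_succ_sub_self_le hμ _

end
end

section
/- For every μ > 0, the Poisson distribution with mean μ satisfies sup_{k ∈ ℕ} e^{−μ}·μ^k/k! ≤ 1/(2·√μ). -/
/-!
With `t = μ / k`, Stirling's bound `k! ≥ √(2πk) (k/e)^k` gives
`Po(μ){k} ≤ (t e^{1-t})^k / √(2πk)`. Since `t e^{1-t} ≤ 1`, the `k`-th power may be replaced by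
the first power, and squaring reduces the claim to `t³ e^{2-2t} ≤ π/2`; the left side is maximal
at `t = 3/2`, where it equals `27/(8e)`. For `k = 0` the claim is `2√μ ≤ 1 + μ ≤ e^μ`.
-/

open Real Nat

lemma mul_exp_one_sub_le_one (t : ℝ) : t * exp (1 - t) ≤ 1 :=
  calc t * exp (1 - t) ≤ exp (t - 1) * exp (1 - t) := by
        gcongr; linarith [add_one_le_exp (t - 1)]
    _ = 1 := by rw [← exp_add]; simp

lemma pow_three_mul_exp_two_sub_two_mul_le (t : ℝ) : t ^ 3 * exp (2 - 2 * t) ≤ π / 2 := by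
  have hcube : (2 * t / 3) ^ 3 ≤ exp (2 * t / 3 - 1) ^ 3 :=
    (Odd.strictMono_pow (by decide)).monotone (by linarith [add_one_le_exp (2 * t / 3 - 1)])
  have hexp : exp (2 * t / 3 - 1) ^ 3 * exp (2 - 2 * t) = exp (-1) := by
    rw [← exp_nat_mul, ← exp_add]; ring_nf
  have hmax : t ^ 3 * exp (2 - 2 * t) ≤ 27 / 8 * exp (-1) := by
    nlinarith [exp_pos (2 - 2 * t)]
  have he : 27 / 8 * exp (-1) ≤ π / 2 := by
    rw [exp_neg, ← div_eq_mul_inv, div_le_div_iff₀ (exp_pos 1) two_pos]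
    nlinarith [exp_one_gt_d9, pi_gt_three]
  exact hmax.trans he

lemma two_mul_sqrt_le_exp {x : ℝ} (hx : 0 ≤ x) : 2 * √x ≤ exp x := by
  nlinarith [sq_nonneg (√x - 1), sq_sqrt hx, add_one_le_exp x]

lemma exp_neg_mul_pow_eq (μ : ℝ) {k : ℕ} (hk : k ≠ 0) :
    exp (-μ) * μ ^ k = (μ / k * exp (1 - μ / k)) ^ k * (k / exp 1) ^ k := by
  have hk' : (k : ℝ) ≠ 0 := by exact_mod_cast hk
  have hbase : μ / k * exp (1 - μ / k) * (k / exp 1) = μ * exp (-μ / k) := by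
    rw [sub_eq_add_neg, exp_add, ← neg_div]; field_simp
  rw [← mul_pow, hbase, mul_pow, ← exp_nat_mul, mul_div_cancel₀ _ hk', mul_comm]

lemma exp_neg_mul_pow_div_factorial_le {μ : ℝ} (hμ : 0 ≤ μ) {k : ℕ} (hk : k ≠ 0) :
    exp (-μ) * μ ^ k / k ! ≤ μ / k * exp (1 - μ / k) / √(2 * π * k) :=
  calc exp (-μ) * μ ^ k / k !
      ≤ (μ / k * exp (1 - μ / k)) ^ k * (k / exp 1) ^ k / (√(2 * π * k) * (k / exp 1) ^ k) := by
        rw [exp_neg_mul_pow_eq μ hk]; gcongr; exact Stirling.le_factorial_stirling k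
    _ = (μ / k * exp (1 - μ / k)) ^ k / √(2 * π * k) := mul_div_mul_right _ _ (by positivity)
    _ ≤ μ / k * exp (1 - μ / k) / √(2 * π * k) := by
        gcongr; exact pow_le_of_le_one (by positivity) (mul_exp_one_sub_le_one _) hk

lemma mul_exp_one_sub_div_sqrt_le {μ : ℝ} (hμ : 0 < μ) {k : ℕ} (hk : k ≠ 0) :
    μ / k * exp (1 - μ / k) / √(2 * π * k) ≤ 1 / (2 * √μ) := by
  set t := μ / k with ht
  have hμt : μ = t * k := by rw [ht, div_mul_cancel₀ _ (by positivity)]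
  rw [div_le_div_iff₀ (by positivity) (by positivity), one_mul]
  apply le_sqrt_of_sq_le
  calc (t * exp (1 - t) * (2 * √μ)) ^ 2 = 4 * k * (t ^ 3 * exp (2 - 2 * t)) := by
        rw [mul_pow, mul_pow, mul_pow, sq_sqrt hμ.le, ← exp_nat_mul, hμt]; ring_nf
    _ ≤ 4 * k * (π / 2) := by gcongr; exact pow_three_mul_exp_two_sub_two_mul_le t
    _ = 2 * π * k := by ring

/-- For every `μ > 0`, the point probabilities of the Poisson distribution with
mean `μ` satisfy `sup_k Po(μ){k} ≤ 1/(2√μ)`. -/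
theorem poisson_point_prob_le (μ : ℝ) (hμ : 0 < μ) (k : ℕ) :
    Real.exp (-μ) * μ ^ k / (Nat.factorial k : ℝ) ≤ 1 / (2 * Real.sqrt μ) := by
  rcases eq_or_ne k 0 with rfl | hk
  · simpa [exp_neg, one_div] using inv_anti₀ (by positivity) (two_mul_sqrt_le_exp hμ.le)
  · exact (exp_neg_mul_pow_div_factorial_le hμ.le hk).trans (mul_exp_one_sub_div_sqrt_le hμ hk)
end
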